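/- arXiv:2602.09840 — 3 statements merged into one kernel-verified Lean document; each statement's English description precedes it below -/
import Mathlib

section
/- Let $a_1,\dots,a_T$ be nonnegative real numbers with $a_1>0$, and let $0<\alpha<1$. Then $\left(\sum_{t=1}^T a_t\right)^{1-\alpha} \le \sum_{t=1}^T \frac{a_t}{\left(\sum_{k=1}^t a_k\right)^{\alpha}} \le \frac{1}{1-\alpha}\left(\sum_{t=1}^T a_t\right)^{1-\alpha}$. -/
/-!
Write `S t = a 1 + ⋯ + a t`. Since `a t ≤ S t ≤ S T`, each term `a t / (S t) ^ α` is at least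
`a t / (S T) ^ α`, and these sum to `(S T) ^ (1 - α)`. For the upper bound, concavity of
`x ↦ x ^ (1 - α)` (Bernoulli's inequality) gives
`(1 - α) a t / (S t) ^ α ≤ (S t) ^ (1 - α) - (S (t - 1)) ^ (1 - α)`, and the right-hand sides
telescope.
-/

open Real Finset

lemma one_sub_mul_sub_div_rpow_le_rpow_sub_rpow {α x y : ℝ} (hα0 : 0 ≤ α) (hα1 : α ≤ 1)
    (hy : 0 ≤ y) (hyx : y ≤ x) :
    (1 - α) * (x - y) / x ^ α ≤ x ^ (1 - α) - y ^ (1 - α) := by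
  rcases (hy.trans hyx).lt_or_eq with hx | hx
  · have hxα : x ^ (1 - α) = x / x ^ α := by rw [rpow_sub hx, rpow_one]
    have hbern := rpow_one_add_le_one_add_mul_self (s := y / x - 1)
      (by linarith [div_nonneg hy hx.le]) (p := 1 - α) (by linarith) (by linarith)
    rw [add_sub_cancel, div_rpow hy hx.le, div_le_iff₀ (by positivity), hxα] at hbern
    have hrhs : (1 + (1 - α) * (y / x - 1)) * (x / x ^ α) =
        x / x ^ α - (1 - α) * (x - y) / x ^ α := by
      field_simp
      ring
    rw [hxα]
    linarith
  · obtain rfl : y = 0 := le_antisymm (hx ▸ hyx) hy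
    subst hx
    simp

lemma div_rpow_le_div_rpow_of_le {α a s S : ℝ} (hα : 0 ≤ α) (ha : 0 ≤ a) (has : a ≤ s)
    (hsS : s ≤ S) : a / S ^ α ≤ a / s ^ α := by
  rcases (ha.trans has).eq_or_lt with rfl | hs
  · simp [le_antisymm has ha]
  · gcongr

section PartialSums

variable {a : ℕ → ℝ} {n : ℕ}

lemma le_sum_Icc_one_of_mem (ha : ∀ t ∈ Icc 1 n, 0 ≤ a t) {t : ℕ} (ht : t ∈ Icc 1 n) :
    a t ≤ ∑ k ∈ Icc 1 t, a k :=
  single_le_sum (fun k hk ↦ ha k (Icc_subset_Icc_right (mem_Icc.1 ht).2 hk))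
    (right_mem_Icc.2 (mem_Icc.1 ht).1)

lemma sum_Icc_one_le_of_le (ha : ∀ t ∈ Icc 1 n, 0 ≤ a t) {t : ℕ} (ht : t ≤ n) :
    ∑ k ∈ Icc 1 t, a k ≤ ∑ k ∈ Icc 1 n, a k :=
  sum_le_sum_of_subset_of_nonneg (Icc_subset_Icc_right ht) fun k hk _ ↦ ha k hk

lemma rpow_one_sub_le_sum_div_rpow_partialSum {α : ℝ} (hα0 : 0 ≤ α) (hα1 : α ≠ 1)
    (ha : ∀ t ∈ Icc 1 n, 0 ≤ a t) :
    (∑ t ∈ Icc 1 n, a t) ^ (1 - α) ≤ ∑ t ∈ Icc 1 n, a t / (∑ k ∈ Icc 1 t, a k) ^ α := by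
  rw [rpow_sub' (sum_nonneg ha) (sub_ne_zero.2 hα1.symm), rpow_one, sum_div]
  exact sum_le_sum fun t ht ↦ div_rpow_le_div_rpow_of_le hα0 (ha t ht)
    (le_sum_Icc_one_of_mem ha ht) (sum_Icc_one_le_of_le ha (mem_Icc.1 ht).2)

lemma sum_div_rpow_partialSum_le {α : ℝ} (hα0 : 0 ≤ α) (hα1 : α < 1)
    (ha : ∀ t ∈ Icc 1 n, 0 ≤ a t) :
    ∑ t ∈ Icc 1 n, a t / (∑ k ∈ Icc 1 t, a k) ^ α ≤
      1 / (1 - α) * (∑ t ∈ Icc 1 n, a t) ^ (1 - α) := by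
  induction n with
  | zero => simp [zero_rpow (sub_ne_zero.2 hα1.ne')]
  | succ n ih =>
    have ha' : ∀ t ∈ Icc 1 n, 0 ≤ a t := fun t ht ↦ ha t (Icc_subset_Icc_right n.le_succ ht)
    have hsucc : ∑ k ∈ Icc 1 (n + 1), a k = ∑ k ∈ Icc 1 n, a k + a (n + 1) :=
      sum_Icc_succ_top (by omega) a
    have hlast : a (n + 1) / (∑ k ∈ Icc 1 (n + 1), a k) ^ α ≤
        1 / (1 - α) *
          ((∑ k ∈ Icc 1 (n + 1), a k) ^ (1 - α) - (∑ k ∈ Icc 1 n, a k) ^ (1 - α)) := by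
      have htangent := one_sub_mul_sub_div_rpow_le_rpow_sub_rpow hα0 hα1.le (sum_nonneg ha')
        (sum_Icc_one_le_of_le ha n.le_succ)
      rw [hsucc, add_sub_cancel_left, mul_div_assoc] at htangent
      rw [one_div_mul_eq_div, le_div_iff₀ (by linarith), mul_comm, hsucc]
      exact htangent
    calc ∑ t ∈ Icc 1 (n + 1), a t / (∑ k ∈ Icc 1 t, a k) ^ α
        = ∑ t ∈ Icc 1 n, a t / (∑ k ∈ Icc 1 t, a k) ^ α
          + a (n + 1) / (∑ k ∈ Icc 1 (n + 1), a k) ^ α := sum_Icc_succ_top (by omega) _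
      _ ≤ 1 / (1 - α) * (∑ t ∈ Icc 1 n, a t) ^ (1 - α) + 1 / (1 - α) *
          ((∑ k ∈ Icc 1 (n + 1), a k) ^ (1 - α) - (∑ k ∈ Icc 1 n, a k) ^ (1 - α)) :=
        add_le_add (ih ha') hlast
      _ = 1 / (1 - α) * (∑ t ∈ Icc 1 (n + 1), a t) ^ (1 - α) := by ring

end PartialSums

theorem stmt0_general (T : ℕ) (a : ℕ → ℝ) (α : ℝ)
    (ha : ∀ t ∈ Finset.Icc 1 T, 0 ≤ a t)
    (hα0 : 0 < α) (hα1 : α < 1) :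
    (∑ t ∈ Finset.Icc 1 T, a t) ^ (1 - α) ≤
      (∑ t ∈ Finset.Icc 1 T, a t / (∑ k ∈ Finset.Icc 1 t, a k) ^ α) ∧
    (∑ t ∈ Finset.Icc 1 T, a t / (∑ k ∈ Finset.Icc 1 t, a k) ^ α) ≤
      (1 / (1 - α)) * (∑ t ∈ Finset.Icc 1 T, a t) ^ (1 - α) :=
  ⟨rpow_one_sub_le_sum_div_rpow_partialSum hα0.le hα1.ne ha,
    sum_div_rpow_partialSum_le hα0.le hα1 ha⟩

theorem stmt0 (T : ℕ) (hT : 1 ≤ T) (a : ℕ → ℝ) (α : ℝ)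
    (ha : ∀ t ∈ Finset.Icc 1 T, 0 ≤ a t) (ha1 : 0 < a 1)
    (hα0 : 0 < α) (hα1 : α < 1) :
    (∑ t ∈ Finset.Icc 1 T, a t) ^ (1 - α) ≤
      (∑ t ∈ Finset.Icc 1 T, a t / (∑ k ∈ Finset.Icc 1 t, a k) ^ α) ∧
    (∑ t ∈ Finset.Icc 1 T, a t / (∑ k ∈ Finset.Icc 1 t, a k) ^ α) ≤
      (1 / (1 - α)) * (∑ t ∈ Finset.Icc 1 T, a t) ^ (1 - α) :=
  stmt0_general T a α ha hα0 hα1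
end

section
/- Let $\mu, \eta^y, \beta, G, v_0 > 0$ with $0<\beta<1$. Suppose at iteration $t$ the quantity $(v_{t+1})^{\beta} - (v_t)^{\beta} - \frac{\mu\eta^y}{2} > 0$, where $v_{t+1} = v_t + g_t^2$, $v_t \ge v_0$, and $0\le g_t\le G$. Then both $g_t^2 > \frac{\mu\eta^y}{2\beta}v_0^{1-\beta}$ and $v_t^{1-\beta} < \frac{2\beta G^2}{\mu\eta^y}$ hold. -/
theorem stmt14 (μ ηy β G v0 vt gt : ℝ)
    (hμ : 0 < μ) (hη : 0 < ηy) (hβ0 : 0 < β) (hβ1 : β < 1)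
    (hG : 0 < G) (hv0 : 0 < v0) (hvt : v0 ≤ vt)
    (hgt0 : 0 ≤ gt) (hgtG : gt ≤ G)
    (hpos : 0 < (vt + gt ^ 2) ^ β - vt ^ β - μ * ηy / 2) :
    μ * ηy / (2 * β) * v0 ^ (1 - β) < gt ^ 2 ∧
      vt ^ (1 - β) < 2 * β * G ^ 2 / (μ * ηy) := by
  have hvt' : 0 < vt := lt_of_lt_of_le hv0 hvt
  have hg2 : (0:ℝ) ≤ gt ^ 2 := sq_nonneg gt
  have hs0 : (0:ℝ) ≤ gt ^ 2 / vt := div_nonneg hg2 hvt'.le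
  have hpow : (0:ℝ) < vt ^ (1 - β) := Real.rpow_pos_of_pos hvt' _
  have key : (vt + gt ^ 2) ^ β ≤ vt ^ β + β * gt ^ 2 / vt ^ (1 - β) := by
    have h1 : vt + gt ^ 2 = vt * (1 + gt ^ 2 / vt) := by field_simp
    have h2 : (1 + gt ^ 2 / vt) ^ β ≤ 1 + β * (gt ^ 2 / vt) :=
      rpow_one_add_le_one_add_mul_self (by linarith) hβ0.le hβ1.le
    have h3 : vt ^ β * (gt ^ 2 / vt) = gt ^ 2 / vt ^ (1 - β) := by
      have hmul : vt ^ β * vt ^ (1 - β) = vt := by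
        rw [← Real.rpow_add hvt']; norm_num
      rw [eq_div_iff hpow.ne', mul_right_comm, hmul]
      field_simp
    calc (vt + gt ^ 2) ^ β = vt ^ β * (1 + gt ^ 2 / vt) ^ β := by
            rw [h1, Real.mul_rpow hvt'.le (by linarith)]
      _ ≤ vt ^ β * (1 + β * (gt ^ 2 / vt)) :=
            mul_le_mul_of_nonneg_left h2 (Real.rpow_pos_of_pos hvt' _).le
      _ = vt ^ β + β * (vt ^ β * (gt ^ 2 / vt)) := by ring
      _ = vt ^ β + β * gt ^ 2 / vt ^ (1 - β) := by rw [h3]; ring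
  have hmain : μ * ηy / 2 < β * gt ^ 2 / vt ^ (1 - β) := by linarith
  have hmain' : μ * ηy / 2 * vt ^ (1 - β) < β * gt ^ 2 := by
    rw [lt_div_iff₀ hpow] at hmain; linarith
  constructor
  · have hv0pow : v0 ^ (1 - β) ≤ vt ^ (1 - β) :=
      Real.rpow_le_rpow hv0.le hvt (by linarith)
    rw [div_mul_eq_mul_div, div_lt_iff₀ (by linarith : (0:ℝ) < 2 * β)]
    have := mul_le_mul_of_nonneg_left hv0pow (by positivity : (0:ℝ) ≤ μ * ηy / 2)
    linarith
  · have hG2 : gt ^ 2 ≤ G ^ 2 := by nlinarith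
    rw [lt_div_iff₀ (by positivity)]
    nlinarith
end

section
/- Let $H_1,H_2$ be real inner product spaces, $f:H_1\times H_2\to\mathbb{R}$ twice continuously differentiable with $f(x,\cdot)$ $\mu$-strongly concave, $\|\nabla^2_{yx}f\|\le L_1$ everywhere, and suppose both $\nabla^2_{yx} f$ and $\nabla^2_{yy} f$ are $L_2$-Lipschitz (jointly in $(x,y)$). Let $y^*(x)$ be the maximizer of $f(x,\cdot)$ and assume $y^*$ is $\kappa$-Lipschitz with $\kappa=L_1/\mu$ and differentiable with $Dy^*(x) = -[\nabla^2_{yy}f(x,y^*(x))]^{-1}\nabla^2_{yx}f(x,y^*(x))$. Then $Dy^*$ is Lipschitz with constant $L_y = \frac{\kappa^2 L_2}{\mu} + \frac{2\kappa L_2}{\mu} + \frac{L_2}{\mu}$, i.e., $\|Dy^*(x_1)-Dy^*(x_2)\| \le L_y\|x_1-x_2\|$. -/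
theorem stmt19 {H1 H2 : Type*}
    [NormedAddCommGroup H1] [InnerProductSpace ℝ H1]
    [NormedAddCommGroup H2] [InnerProductSpace ℝ H2]
    (μ L1 L2 : ℝ) (hμ : 0 < μ) (hL1 : 0 < L1) (hL2 : 0 < L2)
    (ystar : H1 → H2)
    -- A x y represents the Riemannian/Euclidean Hessian ∇²_{yy} f(x,y), invertible
    (A : H1 → H2 → (H2 ≃L[ℝ] H2))
    -- B x y represents the cross derivative ∇²_{yx} f(x,y)
    (B : H1 → H2 → (H1 →L[ℝ] H2))
    (Dystar : H1 → (H1 →L[ℝ] H2))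
    (hB_bound : ∀ x y, ‖B x y‖ ≤ L1)
    -- strong concavity: the inverse Hessian has norm at most 1/μ
    (hAinv_bound : ∀ x y, ‖((A x y).symm : H2 →L[ℝ] H2)‖ ≤ 1 / μ)
    (hA_lip : ∀ x₁ y₁ x₂ y₂,
      ‖((A x₁ y₁ : H2 →L[ℝ] H2)) - (A x₂ y₂ : H2 →L[ℝ] H2)‖ ≤
        L2 * (‖x₁ - x₂‖ + ‖y₁ - y₂‖))
    (hB_lip : ∀ x₁ y₁ x₂ y₂,
      ‖B x₁ y₁ - B x₂ y₂‖ ≤ L2 * (‖x₁ - x₂‖ + ‖y₁ - y₂‖))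
    (hystar_lip : ∀ x₁ x₂, ‖ystar x₁ - ystar x₂‖ ≤ (L1 / μ) * ‖x₁ - x₂‖)
    (hD : ∀ x, Dystar x =
      -(((A x (ystar x)).symm : H2 →L[ℝ] H2).comp (B x (ystar x)))) :
    ∀ x₁ x₂, ‖Dystar x₁ - Dystar x₂‖ ≤
      ((L1 / μ) ^ 2 * L2 / μ + 2 * (L1 / μ) * L2 / μ + L2 / μ) * ‖x₁ - x₂‖ := by
  intro x₁ x₂
  set d := ‖x₁ - x₂‖ with hd_def
  have hd : 0 ≤ d := norm_nonneg _
  set S₁ := ((A x₁ (ystar x₁)).symm : H2 →L[ℝ] H2) with hS₁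
  set S₂ := ((A x₂ (ystar x₂)).symm : H2 →L[ℝ] H2) with hS₂
  set B₁ := B x₁ (ystar x₁) with hB₁
  set B₂ := B x₂ (ystar x₂) with hB₂
  have hy : ‖ystar x₁ - ystar x₂‖ ≤ (L1 / μ) * d := hystar_lip x₁ x₂
  have hBd : ‖B₁ - B₂‖ ≤ L2 * (d + (L1 / μ) * d) := by
    refine le_trans (hB_lip x₁ (ystar x₁) x₂ (ystar x₂)) ?_
    gcongr
  have hAd : ‖((A x₂ (ystar x₂) : H2 →L[ℝ] H2)) - (A x₁ (ystar x₁) : H2 →L[ℝ] H2)‖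
      ≤ L2 * (d + (L1 / μ) * d) := by
    refine le_trans (hA_lip x₂ (ystar x₂) x₁ (ystar x₁)) ?_
    rw [norm_sub_rev, norm_sub_rev (ystar x₂)]
    gcongr
  have hS₁b : ‖S₁‖ ≤ 1 / μ := hAinv_bound x₁ (ystar x₁)
  have hS₂b : ‖S₂‖ ≤ 1 / μ := hAinv_bound x₂ (ystar x₂)
  have hSid : S₁ - S₂ = S₁.comp ((((A x₂ (ystar x₂) : H2 →L[ℝ] H2)) -
      (A x₁ (ystar x₁) : H2 →L[ℝ] H2)).comp S₂) := by
    ext v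
    simp only [ContinuousLinearMap.sub_apply, ContinuousLinearMap.comp_apply,
      map_sub, hS₁, hS₂, ContinuousLinearMap.coe_coe,
      ContinuousLinearEquiv.coe_coe, ContinuousLinearEquiv.apply_symm_apply,
      ContinuousLinearEquiv.symm_apply_apply]
  have hSd : ‖S₁ - S₂‖ ≤ (1 / μ) * (L2 * (d + (L1 / μ) * d) * (1 / μ)) := by
    rw [hSid]
    refine le_trans (ContinuousLinearMap.opNorm_comp_le _ _) ?_
    have h2 := le_trans (ContinuousLinearMap.opNorm_comp_le
      ((((A x₂ (ystar x₂) : H2 →L[ℝ] H2)) - (A x₁ (ystar x₁) : H2 →L[ℝ] H2))) S₂)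
      (mul_le_mul hAd hS₂b (norm_nonneg _) (by positivity))
    exact mul_le_mul hS₁b h2 (norm_nonneg _) (by positivity)
  have hkey : ‖Dystar x₁ - Dystar x₂‖ ≤
      (1 / μ) * (L2 * (d + (L1 / μ) * d)) +
      (1 / μ) * (L2 * (d + (L1 / μ) * d) * (1 / μ)) * L1 := by
    rw [hD x₁, hD x₂, neg_sub_neg, norm_sub_rev]
    have hsplit : S₁.comp B₁ - S₂.comp B₂ =
        S₁.comp (B₁ - B₂) + (S₁ - S₂).comp B₂ := by
      ext v
      simp only [ContinuousLinearMap.sub_apply, ContinuousLinearMap.add_apply,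
        ContinuousLinearMap.comp_apply, map_sub]
      abel
    rw [hsplit]
    refine le_trans (norm_add_le _ _) (add_le_add ?_ ?_)
    · exact le_trans (ContinuousLinearMap.opNorm_comp_le _ _)
        (mul_le_mul hS₁b hBd (norm_nonneg _) (by positivity))
    · exact le_trans (ContinuousLinearMap.opNorm_comp_le _ _)
        (mul_le_mul hSd (hB_bound x₂ (ystar x₂)) (norm_nonneg _) (by positivity))
  refine le_trans hkey (le_of_eq ?_)
  field_simp
  ring
end
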